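/- arXiv:0901.3220 — 3 statements merged into one kernel-verified Lean document; each statement's English description precedes it below -/
import Mathlib

section
/- (Corollary 3: sparse matrices are approximable by sparse matrices with large entries.) Let p = p(n) satisfy p ≍ n. Suppose the sequence {Σ_p} of p×p real symmetric matrices is β-sparse with β ≤ 1/2 − η for some η > 0. Fix ε > 0 and a constant C > 0 (independent of n and p), let T_{β+ε}(Σ_p) be the version of Σ_p hard thresholded at level C n^{−(β+ε)}, and put R_{β+ε} = Σ_p − T_{β+ε}(Σ_p). Then ‖R_{β+ε}‖₂ → 0 as n → ∞. -/
/-!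
The residual `R = Σ - T(Σ)` is symmetric, vanishes off the support of `Σ`, and has entries of
size below `t = C n^{-(β+ε)}`, so `|R| ≤ t · A(Σ)` entrywise. For even `k`, bounding the
operator norm by the Frobenius norm of `R^{k/2}` gives
`‖R‖₂^k ≤ trace (R^k) ≤ t^k φ_p(k) ≤ t^k f(k) p^{β(k-1)+1} = O(n^{1-β-εk})` since `p ≍ n`,
and this tends to `0` once `k` is chosen with `εk > 1 - β`.
-/

open MeasureTheory ProbabilityTheory Matrix Filter Finset

noncomputable section

open scoped Classical

/-- Spectral (operator) norm of a real `p × p` matrix: its largest singular value,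
realized as the operator norm of the associated linear map on Euclidean space. -/
def specNorm {p : ℕ} (M : Matrix (Fin p) (Fin p) ℝ) : ℝ :=
  ‖Matrix.toEuclideanCLM (𝕜 := ℝ) M‖

/-- Adjacency matrix of a matrix: entry `1` where the matrix is nonzero, `0` elsewhere. -/
def adjMat {p : ℕ} (M : Matrix (Fin p) (Fin p) ℝ) : Matrix (Fin p) (Fin p) ℝ :=
  Matrix.of fun i j => if M i j ≠ 0 then (1 : ℝ) else 0

/-- β-sparsity of a sequence of matrices: the number of closed walks of (even) length `k`
on the associated adjacency graphs, `φ_p(k) = trace (A_p ^ k)`, is at most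
`f(k) * p^(β(k-1)+1)` with `f` independent of `p`. -/
def IsBetaSparse (pdim : ℕ → ℕ) (S : ∀ n, Matrix (Fin (pdim n)) (Fin (pdim n)) ℝ)
    (β : ℝ) : Prop :=
  ∃ f : ℕ → ℝ, (∀ k, 0 ≤ f k) ∧
    ∀ n, ∀ k : ℕ, Even k → k ≠ 0 →
      Matrix.trace (adjMat (S n) ^ k) ≤ f k * (pdim n : ℝ) ^ (β * ((k : ℝ) - 1) + 1)

/-- Hard thresholding of the entries of a matrix at level `t`. -/
def hardThresh {p : ℕ} (t : ℝ) (M : Matrix (Fin p) (Fin p) ℝ) : Matrix (Fin p) (Fin p) ℝ :=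
  Matrix.of fun i j => if t ≤ |M i j| then M i j else 0

/-- `p ≍ n` : `p = p(n) → ∞` with `p = O(n)` and `n = O(p)`. -/
def PDimAsymp (pdim : ℕ → ℕ) : Prop :=
  Tendsto pdim atTop atTop ∧
    ∃ C : ℝ, 0 < C ∧ ∀ n : ℕ, (pdim n : ℝ) ≤ C * n ∧ (n : ℝ) ≤ C * pdim n

/-- The (uncentered) sample covariance matrix `S_p = (1/n) ∑ X_i X_iᵀ`. -/
def gramMat {Ω : Type*} (pdim : ℕ → ℕ) (X : ∀ n : ℕ, Fin n → Fin (pdim n) → Ω → ℝ)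
    (n : ℕ) (ω : Ω) : Matrix (Fin (pdim n)) (Fin (pdim n)) ℝ :=
  Matrix.of fun a b => (1 / (n : ℝ)) * ∑ i : Fin n, X n i a ω * X n i b ω

/-- The rows of the `n × p(n)` data matrices are i.i.d.: measurable entries,
independent rows, identically distributed rows. -/
def IIDRows {Ω : Type*} [MeasurableSpace Ω] (μ : Measure Ω) (pdim : ℕ → ℕ)
    (X : ∀ n : ℕ, Fin n → Fin (pdim n) → Ω → ℝ) : Prop :=
  (∀ n (i : Fin n) (j : Fin (pdim n)), Measurable (X n i j)) ∧
  (∀ n : ℕ, iIndepFun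
      (fun i ω => fun j => X n i j ω) μ) ∧
  (∀ n : ℕ, ∀ i i' : Fin n,
      IdentDistrib (fun ω => fun j => X n i j ω) (fun ω => fun j => X n i' j ω) μ μ)

end

theorem specNorm_sq_le_sum_sq {p : ℕ} (M : Matrix (Fin p) (Fin p) ℝ) :
    specNorm M ^ 2 ≤ ∑ i, ∑ j, M i j ^ 2 := by
  let _ : NormedAddCommGroup (Matrix (Fin p) (Fin p) ℝ) := frobeniusNormedAddCommGroup
  let _ : NormedAddCommGroup (Matrix (Fin p) Unit ℝ) := frobeniusNormedAddCommGroup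
  have hF : ‖M‖ ^ 2 = ∑ i, ∑ j, M i j ^ 2 := by
    rw [frobenius_norm_def, ← Real.sqrt_eq_rpow, Real.sq_sqrt (by positivity)]
    simp only [Real.norm_eq_abs, Real.rpow_two, sq_abs]
  have hle : specNorm M ≤ ‖M‖ := by
    refine ContinuousLinearMap.opNorm_le_bound _ (norm_nonneg _) fun x => ?_
    have h := frobenius_norm_mul M (replicateCol Unit x.ofLp)
    rwa [← replicateCol_mulVec, frobenius_norm_replicateCol, frobenius_norm_replicateCol,
      WithLp.toLp_ofLp, ← Matrix.toEuclideanCLM_toLp] at h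
  rw [← hF]
  exact pow_le_pow_left₀ (norm_nonneg _) hle 2

theorem specNorm_pow_two_pow {p : ℕ} {M : Matrix (Fin p) (Fin p) ℝ} (hM : M.IsSymm) (j : ℕ) :
    specNorm (M ^ 2 ^ j) = specNorm M ^ 2 ^ j := by
  have hsa : IsSelfAdjoint (toEuclideanCLM (𝕜 := ℝ) M) :=
    (isHermitian_iff_isSymm.mpr hM).isSelfAdjoint.map _
  rw [specNorm, map_pow]
  exact hsa.norm_pow_two_pow j

theorem Matrix.abs_pow_apply_le {n R : Type*} [Fintype n] [DecidableEq n] [CommRing R]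
    [LinearOrder R] [IsStrictOrderedRing R] {M A : Matrix n n R} (h : ∀ i j, |M i j| ≤ A i j)
    (k : ℕ) (i j : n) : |(M ^ k) i j| ≤ (A ^ k) i j := by
  induction k generalizing j with
  | zero => by_cases hij : i = j <;> simp [hij]
  | succ k ih =>
    rw [pow_succ, pow_succ, mul_apply, mul_apply]
    refine (abs_sum_le_sum_abs _ _).trans (Finset.sum_le_sum fun l _ => ?_)
    rw [abs_mul]
    exact mul_le_mul (ih l) (h l j) (abs_nonneg _) ((abs_nonneg _).trans (ih l))

theorem Matrix.IsSymm.trace_pow_two_mul {n R : Type*} [Fintype n] [DecidableEq n] [CommSemiring R]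
    {M : Matrix n n R} (hM : M.IsSymm) (m : ℕ) :
    trace (M ^ (2 * m)) = ∑ i, ∑ j, (M ^ m) i j ^ 2 := by
  simp only [two_mul, pow_add, trace, diag_apply, mul_apply, sq, (hM.pow m).apply]

-- Exponents `2 * 2 ^ j` because the C⋆-identity yields `‖M ^ m‖ = ‖M‖ ^ m` only for `m = 2 ^ j`.
theorem specNorm_pow_le_trace_pow {p : ℕ} {M A : Matrix (Fin p) (Fin p) ℝ} (hM : M.IsSymm)
    (hA : ∀ i j, |M i j| ≤ A i j) (j : ℕ) :
    specNorm M ^ (2 * 2 ^ j) ≤ trace (A ^ (2 * 2 ^ j)) :=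
  calc specNorm M ^ (2 * 2 ^ j) = specNorm (M ^ 2 ^ j) ^ 2 := by
        rw [specNorm_pow_two_pow hM, ← pow_mul, mul_comm]
    _ ≤ ∑ i, ∑ l, (M ^ 2 ^ j) i l ^ 2 := specNorm_sq_le_sum_sq _
    _ = trace (M ^ (2 * 2 ^ j)) := (hM.trace_pow_two_mul _).symm
    _ ≤ trace (A ^ (2 * 2 ^ j)) :=
        Finset.sum_le_sum fun i _ => (le_abs_self _).trans (abs_pow_apply_le hA _ i i)

theorem Matrix.IsSymm.sub_hardThresh {p : ℕ} {M : Matrix (Fin p) (Fin p) ℝ} (hM : M.IsSymm)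
    (t : ℝ) : (M - hardThresh t M).IsSymm := by
  ext i j
  simp [hardThresh, hM.apply i j]

theorem abs_sub_hardThresh_apply_le {p : ℕ} (M : Matrix (Fin p) (Fin p) ℝ) {t : ℝ} (ht : 0 ≤ t)
    (i j : Fin p) : |(M - hardThresh t M) i j| ≤ (t • adjMat M) i j := by
  by_cases h0 : M i j = 0
  · simp [hardThresh, adjMat, h0]
  · by_cases hth : t ≤ |M i j|
    · simp [hardThresh, adjMat, h0, hth, ht]
    · simpa [hardThresh, adjMat, h0, hth] using (not_le.mp hth).le

theorem specNorm_sub_hardThresh_pow_le {p : ℕ} {M : Matrix (Fin p) (Fin p) ℝ} (hM : M.IsSymm)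
    {t : ℝ} (ht : 0 ≤ t) (j : ℕ) :
    specNorm (M - hardThresh t M) ^ (2 * 2 ^ j) ≤
      t ^ (2 * 2 ^ j) * trace (adjMat M ^ (2 * 2 ^ j)) := by
  simpa [smul_pow, trace_smul] using
    specNorm_pow_le_trace_pow (hM.sub_hardThresh t) (abs_sub_hardThresh_apply_le M ht) j

theorem tendsto_zero_of_pow_le_mul_rpow {a : ℕ → ℝ} {k : ℕ} (hk : k ≠ 0) {K e : ℝ} (he : e < 0)
    (ha : ∀ n, 0 ≤ a n) (hbound : ∀ᶠ n in atTop, a n ^ k ≤ K * (n : ℝ) ^ e) :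
    Tendsto a atTop (nhds 0) := by
  have hpow : Tendsto (fun n => a n ^ k) atTop (nhds 0) := by
    have hlim : Tendsto (fun n : ℕ => K * (n : ℝ) ^ e) atTop (nhds 0) := by
      simpa using ((tendsto_rpow_neg_atTop (neg_pos.mpr he)).comp
        tendsto_natCast_atTop_atTop).const_mul K
    exact tendsto_of_tendsto_of_tendsto_of_le_of_le' tendsto_const_nhds hlim
      (Eventually.of_forall fun n => pow_nonneg (ha n) k) hbound
  have hroot := hpow.rpow_const (p := (k : ℝ)⁻¹) (Or.inr (by positivity))
  rw [Real.zero_rpow (by positivity)] at hroot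
  simpa only [Real.pow_rpow_inv_natCast (ha _) hk] using hroot

theorem statement7_general
    (pdim : ℕ → ℕ) (hdim : PDimAsymp pdim)
    (Sig : ∀ n, Matrix (Fin (pdim n)) (Fin (pdim n)) ℝ)
    (hsymm : ∀ n, (Sig n).IsSymm)
    (β : ℝ) (hβ0 : 0 ≤ β)
    (hsparse : IsBetaSparse pdim Sig β)
    (ε : ℝ) (hε : 0 < ε) (C : ℝ) (hC : 0 < C) :
    Tendsto
      (fun n : ℕ => specNorm
        (Sig n - hardThresh (C * (n : ℝ) ^ (-(β + ε))) (Sig n)))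
      atTop (nhds 0) := by
  obtain ⟨-, C₀, hC₀, hpn⟩ := hdim
  obtain ⟨f, hf0, hf⟩ := hsparse
  obtain ⟨j, hj⟩ := pow_unbounded_of_one_lt ((1 - β) / ε) one_lt_two
  set k := 2 * 2 ^ j
  set s := β * ((k : ℝ) - 1) + 1
  have hk : 1 - β < ε * k :=
    calc 1 - β < ε * 2 ^ j := (div_lt_iff₀' hε).mp hj
      _ ≤ ε * k := by gcongr; push_cast [k]; linarith [pow_pos (two_pos : (0 : ℝ) < 2) j]
  have hs : 0 ≤ s := by
    have : (1 : ℝ) ≤ k := by norm_cast; exact Nat.one_le_iff_ne_zero.mpr (by positivity)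
    linarith [mul_nonneg hβ0 (sub_nonneg.mpr this)]
  refine tendsto_zero_of_pow_le_mul_rpow (k := k) (K := C ^ k * f k * C₀ ^ s)
    (e := 1 - β - ε * k) (by positivity) (by linarith) (fun n => norm_nonneg _) ?_
  filter_upwards [eventually_gt_atTop 0] with n hn
  have hn : (0 : ℝ) < n := Nat.cast_pos.mpr hn
  calc _ ≤ (C * (n : ℝ) ^ (-(β + ε))) ^ k * trace (adjMat (Sig n) ^ k) :=
        specNorm_sub_hardThresh_pow_le (hsymm n) (by positivity) j
    _ ≤ (C * (n : ℝ) ^ (-(β + ε))) ^ k * (f k * (C₀ * n) ^ s) := by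
        gcongr
        exact (hf n k (by simp [k]) (by positivity)).trans
          (by gcongr; exacts [hf0 k, (hpn n).1])
    _ = C ^ k * f k * C₀ ^ s * (n : ℝ) ^ (1 - β - ε * k) := by
        rw [mul_pow, Real.mul_rpow hC₀.le hn.le, ← Real.rpow_natCast (_ ^ _) k,
          ← Real.rpow_mul hn.le, show 1 - β - ε * k = -(β + ε) * k + s by ring,
          Real.rpow_add hn (-(β + ε) * k) s]
        ring

/-- **Corollary 3** (El Karoui): if `{Σ_p}` is β-sparse with `β ≤ 1/2 - η`, `η > 0`,
and `p ≍ n`, then the part of `Σ_p` removed by hard thresholding at level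
`C n^{-(β+ε)}` tends to zero in operator norm: `‖Σ_p - T_{β+ε}(Σ_p)‖₂ → 0`. -/
theorem statement7
    (pdim : ℕ → ℕ) (hdim : PDimAsymp pdim)
    (Sig : ∀ n, Matrix (Fin (pdim n)) (Fin (pdim n)) ℝ)
    (hsymm : ∀ n, (Sig n).IsSymm)
    (β η : ℝ) (hη : 0 < η) (hβ0 : 0 ≤ β) (hβ : β ≤ 1 / 2 - η)
    (hsparse : IsBetaSparse pdim Sig β)
    (ε : ℝ) (hε : 0 < ε) (C : ℝ) (hC : 0 < C) :
    Tendsto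
      (fun n : ℕ => specNorm
        (Sig n - hardThresh (C * (n : ℝ) ^ (-(β + ε))) (Sig n)))
      atTop (nhds 0) :=
  statement7_general pdim hdim Sig hsymm β hβ0 hsparse ε hε C hC
end

section
/- (Fact 1.) The set of β-sparse sequences of matrices is stable under addition: if {B_p} and {C_p} are two sequences of p×p real symmetric matrices, each of which is β-sparse, then the sequence {B_p + C_p} is β-sparse. -/
open MeasureTheory ProbabilityTheory Matrix Filter Finset

/-! The adjacency matrix of `B + C` is entrywise dominated by `A(B) + A(C)`, and all entries
are nonnegative, so `tr A(B + C)^k ≤ tr (A(B) + A(C))^k`. For symmetric `X`, `Y` and even `k`,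
`tr (X + Y)^k ≤ 2^(k-1) (tr X^k + tr Y^k)`: in an orthonormal eigenbasis of `X + Y` each
eigenvalue is a sum `x_ii + y_ii` of diagonal entries of the rotated `X` and `Y`, so the bound
follows from `(a + b)^k ≤ 2^(k-1) (a^k + b^k)` and Peierls' inequality `∑ x_ii^k ≤ tr X^k`.
Hence `2^(k-1) (f_B(k) + f_C(k))` is a sparsity bound for `B + C`. -/

open Unitary

section Spectral

variable {n : Type*} [Fintype n] [DecidableEq n]

theorem Matrix.trace_conjStarAlgAut {R : Type*} [CommSemiring R] [StarRing R]
    (u : unitary (Matrix n n R)) (M : Matrix n n R) :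
    (conjStarAlgAut R _ u M).trace = M.trace := by
  rw [conjStarAlgAut_apply, trace_mul_cycle, coe_star_mul_self, Matrix.one_mul]

theorem Matrix.sum_sq_row_eq_one (U : unitaryGroup n ℝ) (i : n) :
    ∑ j, (U : Matrix n n ℝ) i j ^ 2 = 1 := by
  simpa [mul_apply, one_apply, sq] using congrFun₂ (coe_mul_star_self U) i i

theorem Matrix.sum_sq_col_eq_one (U : unitaryGroup n ℝ) (j : n) :
    ∑ i, (U : Matrix n n ℝ) i j ^ 2 = 1 := by
  simpa [mul_apply, one_apply, sq] using congrFun₂ (coe_star_mul_self U) j j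

/-- Jensen's inequality along the rows of the doubly stochastic matrix `(U i j ^ 2)`. -/
theorem Matrix.sum_map_diag_conj_diagonal_le {f : ℝ → ℝ} (hf : ConvexOn ℝ Set.univ f)
    (U : unitaryGroup n ℝ) (d : n → ℝ) :
    ∑ i, f (conjStarAlgAut ℝ _ U (diagonal d) i i) ≤ ∑ j, f (d j) := by
  have hdiag (i : n) :
      conjStarAlgAut ℝ _ U (diagonal d) i i = ∑ j, (U : Matrix n n ℝ) i j ^ 2 * d j := by
    rw [conjStarAlgAut_apply, mul_apply]
    refine Finset.sum_congr rfl fun j _ => ?_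
    simp only [mul_diagonal, star_apply, star_trivial]
    ring
  calc ∑ i, f (conjStarAlgAut ℝ _ U (diagonal d) i i)
        ≤ ∑ i, ∑ j, (U : Matrix n n ℝ) i j ^ 2 * f (d j) := by
        refine Finset.sum_le_sum fun i _ => ?_
        rw [hdiag]
        simpa using hf.map_sum_le (fun j _ => sq_nonneg _) (sum_sq_row_eq_one U i) (by simp)
    _ = ∑ j, f (d j) := by
        rw [Finset.sum_comm]
        simp_rw [← Finset.sum_mul, sum_sq_col_eq_one, one_mul]

namespace Matrix.IsHermitian

variable {A : Matrix n n ℝ}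

theorem trace_pow_eq_sum_eigenvalues_pow (hA : A.IsHermitian) (k : ℕ) :
    (A ^ k).trace = ∑ i, hA.eigenvalues i ^ k := by
  conv_lhs => rw [hA.spectral_theorem]
  rw [← map_pow, trace_conjStarAlgAut, diagonal_pow, trace_diagonal]
  simp

theorem sum_map_diag_le_sum_map_eigenvalues (hA : A.IsHermitian) {f : ℝ → ℝ}
    (hf : ConvexOn ℝ Set.univ f) :
    ∑ i, f (A i i) ≤ ∑ j, f (hA.eigenvalues j) := by
  conv_lhs => rw [hA.spectral_theorem]
  simpa using
    sum_map_diag_conj_diagonal_le hf hA.eigenvectorUnitary (RCLike.ofReal ∘ hA.eigenvalues)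

theorem sum_diag_pow_le_trace_pow (hA : A.IsHermitian) {k : ℕ} (hk : Even k) :
    ∑ i, A i i ^ k ≤ (A ^ k).trace :=
  hA.trace_pow_eq_sum_eigenvalues_pow k ▸ hA.sum_map_diag_le_sum_map_eigenvalues hk.convexOn_pow

theorem trace_add_pow_le (hA : A.IsHermitian) {B : Matrix n n ℝ} (hB : B.IsHermitian) {k : ℕ}
    (hk : Even k) :
    ((A + B) ^ k).trace ≤ 2 ^ (k - 1) * ((A ^ k).trace + (B ^ k).trace) := by
  have hAB := hA.add hB
  set σ := conjStarAlgAut ℝ (Matrix n n ℝ) (star hAB.eigenvectorUnitary)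
  have hσ : σ A + σ B = diagonal hAB.eigenvalues := by
    rw [← map_add, hAB.conjStarAlgAut_star_eigenvectorUnitary]
    simp
  have hermitian_σ : ∀ {M : Matrix n n ℝ}, M.IsHermitian → (σ M).IsHermitian := fun hM =>
    (isHermitian_iff_isSelfAdjoint.mp hM).map σ
  have trace_σ : ∀ M : Matrix n n ℝ, (σ M ^ k).trace = (M ^ k).trace := fun M => by
    rw [← map_pow, trace_conjStarAlgAut]
  calc ((A + B) ^ k).trace = ∑ i, (σ A i i + σ B i i) ^ k := by
        rw [hAB.trace_pow_eq_sum_eigenvalues_pow]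
        simp [← Matrix.add_apply, hσ]
    _ ≤ ∑ i, 2 ^ (k - 1) * (σ A i i ^ k + σ B i i ^ k) :=
        Finset.sum_le_sum fun i _ => hk.add_pow_le
    _ = 2 ^ (k - 1) * (∑ i, σ A i i ^ k + ∑ i, σ B i i ^ k) := by
        rw [← Finset.mul_sum, Finset.sum_add_distrib]
    _ ≤ 2 ^ (k - 1) * ((A ^ k).trace + (B ^ k).trace) := by
        rw [← trace_σ A, ← trace_σ B]
        gcongr
        · exact (hermitian_σ hA).sum_diag_pow_le_trace_pow hk
        · exact (hermitian_σ hB).sum_diag_pow_le_trace_pow hk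

end Matrix.IsHermitian

end Spectral

section Entrywise

variable {n R : Type*} [Fintype n] [DecidableEq n] [Semiring R] [PartialOrder R]
  [IsOrderedRing R] {M N : Matrix n n R}

theorem Matrix.pow_apply_le_pow_apply (hM : ∀ i j, 0 ≤ M i j) (hMN : ∀ i j, M i j ≤ N i j)
    (k : ℕ) (i j : n) : (M ^ k) i j ≤ (N ^ k) i j := by
  induction k generalizing j with
  | zero => rfl
  | succ k ih =>
    rw [pow_succ, pow_succ, mul_apply, mul_apply]
    exact Finset.sum_le_sum fun l _ => mul_le_mul (ih l) (hMN l j) (hM l j)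
      ((pow_apply_nonneg hM k i l).trans (ih l))

theorem Matrix.trace_pow_le_trace_pow (hM : ∀ i j, 0 ≤ M i j) (hMN : ∀ i j, M i j ≤ N i j)
    (k : ℕ) : (M ^ k).trace ≤ (N ^ k).trace :=
  Finset.sum_le_sum fun i _ => pow_apply_le_pow_apply hM hMN k i i

end Entrywise

section AdjacencyMatrix

variable {p : ℕ}

theorem adjMat_isHermitian {M : Matrix (Fin p) (Fin p) ℝ} (hM : M.IsSymm) :
    (adjMat M).IsHermitian := by
  rw [IsHermitian, conjTranspose_eq_transpose_of_trivial]
  exact IsSymm.ext fun i j => by simp [adjMat, hM.apply i j]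

theorem adjMat_nonneg (M : Matrix (Fin p) (Fin p) ℝ) (i j : Fin p) : 0 ≤ adjMat M i j :=
  ite_nonneg zero_le_one le_rfl

theorem adjMat_add_le (M N : Matrix (Fin p) (Fin p) ℝ) (i j : Fin p) :
    adjMat (M + N) i j ≤ (adjMat M + adjMat N) i j := by
  by_cases hM : M i j = 0 <;> by_cases hN : N i j = 0 <;> simp [adjMat, hM, hN]
  exact (ite_le_one le_rfl zero_le_one).trans (le_add_of_nonneg_right zero_le_one)

theorem trace_adjMat_add_pow_le {M N : Matrix (Fin p) (Fin p) ℝ} (hM : M.IsSymm) (hN : N.IsSymm)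
    {k : ℕ} (hk : Even k) :
    (adjMat (M + N) ^ k).trace ≤ 2 ^ (k - 1) * ((adjMat M ^ k).trace + (adjMat N ^ k).trace) :=
  (trace_pow_le_trace_pow (adjMat_nonneg _) (adjMat_add_le M N) k).trans
    ((adjMat_isHermitian hM).trace_add_pow_le (adjMat_isHermitian hN) hk)

end AdjacencyMatrix

theorem statement9_general
    (pdim : ℕ → ℕ)
    (B C : ∀ n, Matrix (Fin (pdim n)) (Fin (pdim n)) ℝ)
    (hBsymm : ∀ n, (B n).IsSymm) (hCsymm : ∀ n, (C n).IsSymm)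
    (β : ℝ)
    (hB : IsBetaSparse pdim B β) (hC : IsBetaSparse pdim C β) :
    IsBetaSparse pdim (fun n => B n + C n) β := by
  obtain ⟨fB, hfB0, hfB⟩ := hB
  obtain ⟨fC, hfC0, hfC⟩ := hC
  refine ⟨fun k => 2 ^ (k - 1) * (fB k + fC k),
    fun k => mul_nonneg (by positivity) (add_nonneg (hfB0 k) (hfC0 k)), fun n k hk hk0 => ?_⟩
  calc (adjMat (B n + C n) ^ k).trace
      ≤ 2 ^ (k - 1) * ((adjMat (B n) ^ k).trace + (adjMat (C n) ^ k).trace) :=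
        trace_adjMat_add_pow_le (hBsymm n) (hCsymm n) hk
    _ ≤ 2 ^ (k - 1) * (fB k * (pdim n : ℝ) ^ (β * ((k : ℝ) - 1) + 1)
          + fC k * (pdim n : ℝ) ^ (β * ((k : ℝ) - 1) + 1)) := by
        gcongr
        exacts [hfB n k hk hk0, hfC n k hk hk0]
    _ = 2 ^ (k - 1) * (fB k + fC k) * (pdim n : ℝ) ^ (β * ((k : ℝ) - 1) + 1) := by ring

/-- **Fact 1** (El Karoui): the set of β-sparse sequences of symmetric matrices is
stable under addition. -/
theorem statement9
    (pdim : ℕ → ℕ)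
    (B C : ∀ n, Matrix (Fin (pdim n)) (Fin (pdim n)) ℝ)
    (hBsymm : ∀ n, (B n).IsSymm) (hCsymm : ∀ n, (C n).IsSymm)
    (β : ℝ) (hβ0 : 0 ≤ β) (hβ1 : β ≤ 1)
    (hB : IsBetaSparse pdim B β) (hC : IsBetaSparse pdim C β) :
    IsBetaSparse pdim (fun n => B n + C n) β :=
  statement9_general pdim B C hBsymm hCsymm β hB hC
end

section
/- (Moment bound for ratios, used for sample correlations.) Let k ≥ 1 be an integer, ρ ∈ [−1,1] and ε ∈ (0,1). Let F and G be real random variables with G ≠ 0 almost surely and |F/G| ≤ 1 almost surely. Then E[(F/G − ρ)^{2k}] ≤ (2^{2k}/(1−ε)^{2k}) · (E[(F − ρ)^{2k}] + ρ^{2k} E[(G − 1)^{2k}]) + 2^{2k} P(|G − 1| ≥ ε). In particular, if E[(F_n − ρ)^{2k}] = O(n^{−k}) and E[(G_n − 1)^{2k}] = O(n^{−k}) for a sequence of such pairs (F_n, G_n), then E[(F_n/G_n − ρ)^{2k}] = O(n^{−k}). -/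
open MeasureTheory ProbabilityTheory Matrix Filter Finset

/-!
Split according to whether `|G - 1| < ε`. There `|G| ≥ 1 - ε` and
`F / G - ρ = ((F - ρ) - ρ (G - 1)) / G`, so `(a + b)^{2k} ≤ 2^{2k} (a^{2k} + b^{2k})` gives the
moment term; elsewhere `|F / G - ρ| ≤ 2`, which costs `2^{2k} P(|G - 1| ≥ ε)`. Chebyshev bounds
that probability by `ε^{-2k} E[(G - 1)^{2k}]`, so the `O(n^{-k})` rates transfer to the ratio.
-/

lemma add_pow_le_two_pow_mul {a b : ℝ} (ha : 0 ≤ a) (hb : 0 ≤ b) (m : ℕ) :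
    (a + b) ^ m ≤ 2 ^ m * (a ^ m + b ^ m) :=
  (add_pow_le ha hb m).trans <| by gcongr; exacts [one_le_two, m.sub_le 1]

lemma sub_pow_le_two_pow {x ρ : ℝ} {m : ℕ} (hm : Even m) (hx : |x| ≤ 1) (hρ : |ρ| ≤ 1) :
    (x - ρ) ^ m ≤ 2 ^ m := by
  rw [← hm.pow_abs]
  gcongr
  linarith [abs_sub x ρ]

lemma abs_div_sub_le {f g ρ ε : ℝ} (hε : ε < 1) (hg : |g - 1| ≤ ε) :
    |f / g - ρ| ≤ (|f - ρ| + |ρ| * |g - 1|) / (1 - ε) := by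
  have hg_ge : 1 - ε ≤ |g| := by
    linarith [abs_sub_abs_le_abs_sub 1 g, abs_sub_comm g 1, abs_one (α := ℝ)]
  have hg0 : g ≠ 0 := by
    rintro rfl
    simp only [abs_zero] at hg_ge
    linarith
  calc |f / g - ρ| = |(f - ρ) - ρ * (g - 1)| / |g| := by
        rw [← abs_div]
        congr 1
        field_simp
        ring
    _ ≤ (|f - ρ| + |ρ| * |g - 1|) / (1 - ε) := by
        gcongr
        exact (abs_sub _ _).trans_eq (by rw [abs_mul])

lemma div_sub_pow_le {f g ρ ε : ℝ} {m : ℕ} (hm : Even m) (hε : ε < 1) (hg : |g - 1| ≤ ε) :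
    (f / g - ρ) ^ m ≤
      2 ^ m / (1 - ε) ^ m * ((f - ρ) ^ m + ρ ^ m * (g - 1) ^ m) := by
  have hε' : 0 < 1 - ε := by linarith
  calc (f / g - ρ) ^ m = |f / g - ρ| ^ m := (hm.pow_abs _).symm
    _ ≤ ((|f - ρ| + |ρ| * |g - 1|) / (1 - ε)) ^ m := by gcongr; exact abs_div_sub_le hε hg
    _ = (|f - ρ| + |ρ| * |g - 1|) ^ m / (1 - ε) ^ m := div_pow _ _ _
    _ ≤ 2 ^ m * (|f - ρ| ^ m + (|ρ| * |g - 1|) ^ m) / (1 - ε) ^ m := by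
        gcongr
        exact add_pow_le_two_pow_mul (abs_nonneg _) (by positivity) m
    _ = 2 ^ m / (1 - ε) ^ m * ((f - ρ) ^ m + ρ ^ m * (g - 1) ^ m) := by
        rw [mul_pow, hm.pow_abs, hm.pow_abs, hm.pow_abs]
        ring

lemma div_sub_pow_le_add_ite {f g ρ ε : ℝ} {m : ℕ} (hm : Even m) (hρ : |ρ| ≤ 1) (hε : ε < 1)
    (hfg : |f / g| ≤ 1) :
    (f / g - ρ) ^ m ≤
      2 ^ m / (1 - ε) ^ m * ((f - ρ) ^ m + ρ ^ m * (g - 1) ^ m) +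
        if ε ≤ |g - 1| then 2 ^ m else 0 := by
  split_ifs with hg
  · have hmoment : 0 ≤ 2 ^ m / (1 - ε) ^ m * ((f - ρ) ^ m + ρ ^ m * (g - 1) ^ m) :=
      mul_nonneg (div_nonneg (hm.pow_nonneg 2) (hm.pow_nonneg _))
        (add_nonneg (hm.pow_nonneg _) (mul_nonneg (hm.pow_nonneg _) (hm.pow_nonneg _)))
    linarith [sub_pow_le_two_pow hm hfg hρ]
  · simpa using div_sub_pow_le hm hε (not_le.mp hg).le

section Moments

variable {Ω : Type*} [MeasurableSpace Ω] {μ : Measure Ω} [IsFiniteMeasure μ] {m : ℕ}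

lemma measureReal_abs_ge_le_integral_pow_div {X : Ω → ℝ} {ε : ℝ} (hε : 0 < ε) (hm : Even m)
    (hX : Integrable (fun ω => X ω ^ m) μ) :
    μ.real {ω | ε ≤ |X ω|} ≤ (∫ ω, X ω ^ m ∂μ) / ε ^ m := by
  have hsub : {ω | ε ≤ |X ω|} ⊆ {ω | ε ^ m ≤ X ω ^ m} := fun ω (hω : ε ≤ |X ω|) =>
    show ε ^ m ≤ X ω ^ m from hm.pow_abs (X ω) ▸ pow_le_pow_left₀ hε.le hω m
  rw [le_div_iff₀ (by positivity), mul_comm]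
  exact (mul_le_mul_of_nonneg_left (measureReal_mono hsub) (by positivity)).trans
    (mul_meas_ge_le_integral_of_nonneg (ae_of_all _ fun ω => hm.pow_nonneg _) hX _)

variable {F G : Ω → ℝ} {ρ ε : ℝ}

theorem integral_div_sub_pow_le (hm : Even m) (hρ : |ρ| ≤ 1) (hε : ε < 1)
    (hF : Measurable F) (hG : Measurable G) (hFG : ∀ᵐ ω ∂μ, |F ω / G ω| ≤ 1)
    (hFint : Integrable (fun ω => (F ω - ρ) ^ m) μ)
    (hGint : Integrable (fun ω => (G ω - 1) ^ m) μ) :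
    ∫ ω, (F ω / G ω - ρ) ^ m ∂μ ≤
      2 ^ m / (1 - ε) ^ m * ((∫ ω, (F ω - ρ) ^ m ∂μ) + ρ ^ m * ∫ ω, (G ω - 1) ^ m ∂μ) +
        2 ^ m * μ.real {ω | ε ≤ |G ω - 1|} := by
  set S := {ω | ε ≤ |G ω - 1|}
  have hS : MeasurableSet S := measurableSet_le measurable_const ((hG.sub measurable_const).abs)
  have hint : Integrable (fun ω => (F ω - ρ) ^ m + ρ ^ m * (G ω - 1) ^ m) μ :=
    hFint.add (hGint.const_mul _)
  have hind : Integrable (S.indicator fun _ => (2 : ℝ) ^ m) μ := (integrable_const _).indicator hS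
  have hbounded : Integrable (fun ω => (F ω / G ω - ρ) ^ m) μ := by
    refine (integrable_const ((2 : ℝ) ^ m)).mono'
      (((hF.div hG).sub measurable_const).pow_const m).aestronglyMeasurable ?_
    filter_upwards [hFG] with ω hω
    rw [Real.norm_of_nonneg (hm.pow_nonneg _)]
    exact sub_pow_le_two_pow hm hω hρ
  calc ∫ ω, (F ω / G ω - ρ) ^ m ∂μ
      ≤ ∫ ω, 2 ^ m / (1 - ε) ^ m * ((F ω - ρ) ^ m + ρ ^ m * (G ω - 1) ^ m) +
          S.indicator (fun _ => 2 ^ m) ω ∂μ := by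
        refine integral_mono_ae hbounded ((hint.const_mul _).add hind) ?_
        filter_upwards [hFG] with ω hω
        simpa only [S, Set.indicator_apply, Set.mem_ofPred_eq] using
          div_sub_pow_le_add_ite hm hρ hε hω
    _ = _ := by
        rw [integral_add (hint.const_mul _) hind, integral_const_mul,
          integral_add hFint (hGint.const_mul _), integral_const_mul,
          integral_indicator_const _ hS, smul_eq_mul, mul_comm (μ.real S)]

theorem integral_div_sub_pow_le_moments (hm : Even m) (hρ : |ρ| ≤ 1) (hε : ε ∈ Set.Ioo 0 1)
    (hF : Measurable F) (hG : Measurable G) (hFG : ∀ᵐ ω ∂μ, |F ω / G ω| ≤ 1)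
    (hFint : Integrable (fun ω => (F ω - ρ) ^ m) μ)
    (hGint : Integrable (fun ω => (G ω - 1) ^ m) μ) :
    ∫ ω, (F ω / G ω - ρ) ^ m ∂μ ≤
      2 ^ m / (1 - ε) ^ m * ∫ ω, (F ω - ρ) ^ m ∂μ +
        (2 ^ m / (1 - ε) ^ m * ρ ^ m + 2 ^ m / ε ^ m) * ∫ ω, (G ω - 1) ^ m ∂μ := by
  have htail := measureReal_abs_ge_le_integral_pow_div (X := fun ω => G ω - 1) hε.1 hm hGint
  calc ∫ ω, (F ω / G ω - ρ) ^ m ∂μ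
      ≤ 2 ^ m / (1 - ε) ^ m * ((∫ ω, (F ω - ρ) ^ m ∂μ) + ρ ^ m * ∫ ω, (G ω - 1) ^ m ∂μ) +
        2 ^ m * ((∫ ω, (G ω - 1) ^ m ∂μ) / ε ^ m) := by
        grw [integral_div_sub_pow_le hm hρ hε.2 hF hG hFG hFint hGint, htail]
    _ = _ := by ring

end Moments

theorem statement17_general
    {Ω : Type*} [MeasurableSpace Ω] (μ : Measure Ω) [IsProbabilityMeasure μ]
    (k : ℕ)
    (ρ ε : ℝ) (hρ : ρ ∈ Set.Icc (-1 : ℝ) 1) (hε : ε ∈ Set.Ioo (0 : ℝ) 1)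
    (F G : ℕ → Ω → ℝ)
    (hFmeas : ∀ n, Measurable (F n)) (hGmeas : ∀ n, Measurable (G n))
    (hratio : ∀ n, ∀ᵐ ω ∂μ, |F n ω / G n ω| ≤ 1)
    (hFint : ∀ n, Integrable (fun ω => (F n ω - ρ) ^ (2 * k)) μ)
    (hGint : ∀ n, Integrable (fun ω => (G n ω - 1) ^ (2 * k)) μ) :
    (∀ n, ∫ ω, (F n ω / G n ω - ρ) ^ (2 * k) ∂μ ≤
        (2 ^ (2 * k) / (1 - ε) ^ (2 * k)) *
            ((∫ ω, (F n ω - ρ) ^ (2 * k) ∂μ) +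
              ρ ^ (2 * k) * ∫ ω, (G n ω - 1) ^ (2 * k) ∂μ) +
          2 ^ (2 * k) * (μ {ω | ε ≤ |G n ω - 1|}).toReal) ∧
    (((fun n : ℕ => ∫ ω, (F n ω - ρ) ^ (2 * k) ∂μ) =O[atTop]
        fun n : ℕ => ((n : ℝ) ^ k)⁻¹) →
      ((fun n : ℕ => ∫ ω, (G n ω - 1) ^ (2 * k) ∂μ) =O[atTop]
        fun n : ℕ => ((n : ℝ) ^ k)⁻¹) →
      ((fun n : ℕ => ∫ ω, (F n ω / G n ω - ρ) ^ (2 * k) ∂μ) =O[atTop]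
        fun n : ℕ => ((n : ℝ) ^ k)⁻¹)) := by
  have hm : Even (2 * k) := even_two_mul k
  have hρ' : |ρ| ≤ 1 := abs_le.mpr hρ
  refine ⟨fun n => integral_div_sub_pow_le hm hρ' hε.2 (hFmeas n) (hGmeas n) (hratio n)
    (hFint n) (hGint n), fun hFO hGO => ?_⟩
  refine (Asymptotics.isBigO_of_le _ fun n => ?_).trans
    ((hFO.const_mul_left (2 ^ (2 * k) / (1 - ε) ^ (2 * k))).add
      (hGO.const_mul_left (2 ^ (2 * k) / (1 - ε) ^ (2 * k) * ρ ^ (2 * k) + 2 ^ (2 * k) / ε ^ (2 * k))))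
  rw [Real.norm_of_nonneg (integral_nonneg fun ω => hm.pow_nonneg _)]
  exact (integral_div_sub_pow_le_moments hm hρ' hε (hFmeas n) (hGmeas n) (hratio n)
    (hFint n) (hGint n)).trans (Real.le_norm_self _)

/-- Moment bound for ratios, used for sample correlations: if `|F/G| ≤ 1` a.s. and
`G ≠ 0` a.s., then
`E[(F/G - ρ)^{2k}] ≤ (2^{2k}/(1-ε)^{2k}) (E[(F-ρ)^{2k}] + ρ^{2k} E[(G-1)^{2k}])
  + 2^{2k} P(|G-1| ≥ ε)`;
in particular `O(n^{-k})` moment bounds for `F_n - ρ` and `G_n - 1` imply an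
`O(n^{-k})` moment bound for `F_n/G_n - ρ`. -/
theorem statement17
    {Ω : Type*} [MeasurableSpace Ω] (μ : Measure Ω) [IsProbabilityMeasure μ]
    (k : ℕ) (hk : 1 ≤ k)
    (ρ ε : ℝ) (hρ : ρ ∈ Set.Icc (-1 : ℝ) 1) (hε : ε ∈ Set.Ioo (0 : ℝ) 1)
    (F G : ℕ → Ω → ℝ)
    (hFmeas : ∀ n, Measurable (F n)) (hGmeas : ∀ n, Measurable (G n))
    (hG0 : ∀ n, ∀ᵐ ω ∂μ, G n ω ≠ 0)
    (hratio : ∀ n, ∀ᵐ ω ∂μ, |F n ω / G n ω| ≤ 1)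
    (hFint : ∀ n, Integrable (fun ω => (F n ω - ρ) ^ (2 * k)) μ)
    (hGint : ∀ n, Integrable (fun ω => (G n ω - 1) ^ (2 * k)) μ) :
    (∀ n, ∫ ω, (F n ω / G n ω - ρ) ^ (2 * k) ∂μ ≤
        (2 ^ (2 * k) / (1 - ε) ^ (2 * k)) *
            ((∫ ω, (F n ω - ρ) ^ (2 * k) ∂μ) +
              ρ ^ (2 * k) * ∫ ω, (G n ω - 1) ^ (2 * k) ∂μ) +
          2 ^ (2 * k) * (μ {ω | ε ≤ |G n ω - 1|}).toReal) ∧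
    (((fun n : ℕ => ∫ ω, (F n ω - ρ) ^ (2 * k) ∂μ) =O[atTop]
        fun n : ℕ => ((n : ℝ) ^ k)⁻¹) →
      ((fun n : ℕ => ∫ ω, (G n ω - 1) ^ (2 * k) ∂μ) =O[atTop]
        fun n : ℕ => ((n : ℝ) ^ k)⁻¹) →
      ((fun n : ℕ => ∫ ω, (F n ω / G n ω - ρ) ^ (2 * k) ∂μ) =O[atTop]
        fun n : ℕ => ((n : ℝ) ^ k)⁻¹)) :=
  statement17_general μ k ρ ε hρ hε F G hFmeas hGmeas hratio hFint hGint
end
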